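/- arXiv:math/0308286 — 2 statements merged into one kernel-verified Lean document; each statement's English description precedes it below -/
import Mathlib

section
/- Let p be prime, k ≥ 0, and let Q(z) = Σ_{j=0}^{k} cⱼ z^{nⱼ} be a polynomial with nonzero complex coefficients cⱼ and exponents 0 ≤ n₀ < n₁ < ⋯ < n_k < p. Then Q has at most k zeroes among the p-th roots of unity. -/
/-!
If `Q` vanished at `k + 1` distinct `p`-th roots of unity `z_i`, its coefficient vector would lie
in the kernel of `(z_i ^ n_j)`, contradicting Chebotarev's theorem that every square minor of the
`p × p` Fourier matrix is nonsingular.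

For Chebotarev: over `ℤ`, the generalised Vandermonde determinant `det (X_i ^ n_j)` is divisible by
the Vandermonde determinant `∏_{i<j} (X_j - X_i)`, whose factors are pairwise coprime primes that
each divide it; call the quotient `S`. Specialising `X_i ↦ x ^ i` and cancelling the common power
of `x - 1` gives `S(1, …, 1) * ∏_{i<j} (j - i) = ∏_{i<j} (n_j - n_i)`, which is prime to `p`.
On the other hand, the Vandermonde determinant of the distinct `z_i = ζ ^ a_i` is nonzero, so a
vanishing minor forces `S(z) = 0`; then `Φ_p` divides `S(x ^ a_i)` in `ℤ[x]`, and `p = Φ_p(1)`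
divides `S(1, …, 1)`.
-/

open Finset Matrix

namespace MvPolynomial

variable {σ R : Type*} [DecidableEq σ] [CommRing R]

theorem X_sub_X_dvd_iff (i j : σ) (P : MvPolynomial σ R) :
    X j - X i ∣ P ↔ rename (Function.update id j i) P = 0 := by
  constructor
  · rintro ⟨Q, rfl⟩
    simp [Function.update_apply]
  · intro h
    set I := Ideal.span {(X j - X i : MvPolynomial σ R)}
    have hmk : (Ideal.Quotient.mkₐ R I).comp (rename (Function.update id j i)) =
        Ideal.Quotient.mkₐ R I := by
      refine algHom_ext fun l => ?_
      rcases eq_or_ne l j with rfl | hl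
      · have : X i - X l ∈ I := Ideal.mem_span_singleton.mpr ⟨-1, by ring⟩
        simpa [Ideal.Quotient.eq] using this
      · simp [Function.update_of_ne hl]
    have := congrArg (· P) hmk
    simp only [AlgHom.comp_apply, h, map_zero, Ideal.Quotient.mkₐ_eq_mk] at this
    exact Ideal.mem_span_singleton.mp (Ideal.Quotient.eq_zero_iff_mem.mp this.symm)

theorem prime_X_sub_X [IsDomain R] {i j : σ} (hij : i ≠ j) :
    Prime (X j - X i : MvPolynomial σ R) := by
  refine ⟨sub_ne_zero.mpr fun h => hij (X_injective h).symm, fun hu => ?_, fun P Q hPQ => ?_⟩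
  · simpa [Function.update_apply, hij] using hu.map (rename (R := R) (Function.update id j i))
  · simpa only [X_sub_X_dvd_iff, map_mul, mul_eq_zero] using hPQ

theorem isRelPrime_X_sub_X [IsDomain R] [LinearOrder σ] {i j k l : σ} (hij : i < j)
    (hkl : k < l) (hne : (i, j) ≠ (k, l)) :
    IsRelPrime (X j - X i : MvPolynomial σ R) (X l - X k) := by
  rw [(prime_X_sub_X hij.ne).irreducible.isRelPrime_iff_not_dvd, X_sub_X_dvd_iff, map_sub,
    rename_X, rename_X, sub_eq_zero, (X_injective (σ := σ) (R := R)).eq_iff]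
  simp only [Function.update_apply, id]
  split_ifs <;> grind

theorem aeval_det_X_pow {ι A : Type*} [Fintype ι] [DecidableEq ι] [CommRing A] [Algebra R A] (v : ι → A)
    (n : ι → ℕ) :
    aeval v (of fun i j => (X i : MvPolynomial ι R) ^ n j).det = (of fun i j => v i ^ n j).det := by
  rw [AlgHom.map_det]
  congr
  ext
  simp

theorem aeval_det_vandermonde_X {m : ℕ} {A : Type*} [CommRing A] [Algebra R A] (v : Fin m → A) :
    aeval v (vandermonde (X : Fin m → MvPolynomial (Fin m) R)).det = (vandermonde v).det :=
  aeval_det_X_pow v fun j => j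

end MvPolynomial

namespace Polynomial

variable {R : Type*} [CommRing R]

theorem X_pow_sub_X_pow_eq_mul (a b : ℕ) :
    (X : R[X]) ^ b - X ^ a = (X - 1) * (∑ t ∈ range b, X ^ t - ∑ t ∈ range a, X ^ t) := by
  rw [mul_sub, mul_geom_sum, mul_geom_sum]
  ring

theorem exists_det_vandermonde_X_pow_eq {m : ℕ} (v : Fin m → ℕ) :
    ∃ Q : R[X], (vandermonde fun i => (X : R[X]) ^ v i).det =
      (∏ i : Fin m, (X - 1) ^ #(Ioi i)) * Q ∧ Q.eval 1 = (vandermonde fun i => (v i : R)).det := by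
  refine ⟨∏ i : Fin m, ∏ j ∈ Ioi i, (∑ t ∈ range (v j), X ^ t - ∑ t ∈ range (v i), X ^ t), ?_, ?_⟩
  · simp only [det_vandermonde, X_pow_sub_X_pow_eq_mul, prod_mul_distrib, prod_const]
  · simp [eval_prod, eval_finsetSum, det_vandermonde]

end Polynomial

namespace Matrix

open MvPolynomial in
theorem det_vandermonde_X_dvd_det_X_pow {R : Type*} [CommRing R] [IsDomain R]
    [UniqueFactorizationMonoid R] {m : ℕ} (n : Fin m → ℕ) :
    (vandermonde (X : Fin m → MvPolynomial (Fin m) R)).det ∣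
      (of fun i j => (X i : MvPolynomial (Fin m) R) ^ n j).det := by
  rw [det_vandermonde]
  refine prod_dvd_of_isRelPrime (fun i _ k _ hik => ?_) fun i _ =>
    prod_dvd_of_isRelPrime (fun j hj l hl hjl => ?_) fun j hj => ?_
  · exact IsRelPrime.prod_left fun j hj => IsRelPrime.prod_right fun l hl =>
      isRelPrime_X_sub_X (mem_Ioi.1 hj) (mem_Ioi.1 hl) (by simp [hik])
  · exact isRelPrime_X_sub_X (mem_Ioi.1 hj) (mem_Ioi.1 hl) (by simp [hjl])
  · rw [X_sub_X_dvd_iff, AlgHom.map_det]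
    exact det_zero_of_row_eq (mem_Ioi.1 hj).ne
      (funext fun k => by simp [Function.update_of_ne (mem_Ioi.1 hj).ne])

open Polynomial in
theorem det_vandermonde_eq_mul_eval_one {R : Type*} [CommRing R] [IsDomain R] {m : ℕ}
    {n : Fin m → ℕ} {S : MvPolynomial (Fin m) R}
    (hS : (of fun i j => (MvPolynomial.X i : MvPolynomial (Fin m) R) ^ n j).det =
      (vandermonde MvPolynomial.X).det * S) :
    (vandermonde fun i => (n i : R)).det =
      (vandermonde fun i : Fin m => ((i : ℕ) : R)).det * MvPolynomial.eval 1 S := by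
  have h := congrArg (MvPolynomial.aeval fun i : Fin m => (X : R[X]) ^ (i : ℕ)) hS
  rw [map_mul, MvPolynomial.aeval_det_X_pow, MvPolynomial.aeval_det_vandermonde_X] at h
  have hG : (of fun i j : Fin m => ((X : R[X]) ^ (i : ℕ)) ^ n j) =
      (vandermonde fun j => X ^ n j)ᵀ := by
    ext i j
    simp [pow_right_comm]
  obtain ⟨Qn, hQn, hQn1⟩ := exists_det_vandermonde_X_pow_eq (R := R) n
  obtain ⟨Qm, hQm, hQm1⟩ := exists_det_vandermonde_X_pow_eq (R := R) fun i : Fin m => (i : ℕ)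
  rw [hG, det_transpose, hQn, hQm, mul_assoc] at h
  have hX1 : ∏ i : Fin m, ((X : R[X]) - 1) ^ #(Ioi i) ≠ 0 :=
    prod_ne_zero_iff.mpr fun i _ => pow_ne_zero _ (X_sub_C_ne_zero 1)
  have h1 := congrArg (eval 1) (mul_left_cancel₀ hX1 h)
  rw [eval_mul, hQn1, hQm1, ← coe_aeval_eq_eval, MvPolynomial.comp_aeval_apply] at h1
  simp only [map_pow, aeval_X, one_pow] at h1
  exact h1

end Matrix

theorem Int.not_prime_dvd_det_vandermonde {p m : ℕ} (hp : p.Prime) {n : Fin m → ℕ}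
    (hn : Function.Injective n) (hnp : ∀ j, n j < p) :
    ¬ (p : ℤ) ∣ (vandermonde fun i => (n i : ℤ)).det := by
  have hp' := Nat.prime_iff_prime_int.mp hp
  rw [det_vandermonde]
  refine hp'.not_dvd_finsetProd fun i _ => hp'.not_dvd_finsetProd fun j hj hdvd => ?_
  have hi := hnp i
  have hj' := hnp j
  have hlt : |(n j : ℤ) - n i| < p := abs_sub_lt_iff.mpr ⟨by omega, by omega⟩
  exact (mem_Ioi.1 hj).ne
    (hn (by simpa [sub_eq_zero] using Int.eq_zero_of_abs_lt_dvd hdvd hlt)).symm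

namespace IsPrimitiveRoot

variable {K : Type*} [Field K] [CharZero K] {p : ℕ} [Fact p.Prime] {ζ : K}

open Polynomial in
theorem prime_dvd_eval_one (hζ : IsPrimitiveRoot ζ p) {P : ℤ[X]} (hP : aeval ζ P = 0) :
    (p : ℤ) ∣ P.eval 1 := by
  have hp := (Fact.out : p.Prime).pos
  have hdvd := minpoly.isIntegrallyClosed_dvd (hζ.isIntegral hp) hP
  rw [← cyclotomic_eq_minpoly hζ hp] at hdvd
  simpa using eval_dvd (x := 1) hdvd

theorem prime_dvd_eval_one_of_aeval_pow_eq_zero {σ : Type*} (hζ : IsPrimitiveRoot ζ p)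
    (a : σ → ℕ) {S : MvPolynomial σ ℤ} (hS : MvPolynomial.aeval (fun i => ζ ^ a i) S = 0) :
    (p : ℤ) ∣ MvPolynomial.eval 1 S := by
  have := hζ.prime_dvd_eval_one (P := MvPolynomial.aeval (fun i => Polynomial.X ^ a i) S)
    (by simpa [MvPolynomial.comp_aeval_apply] using hS)
  rw [← Polynomial.coe_aeval_eq_eval, MvPolynomial.comp_aeval_apply] at this
  simp only [map_pow, Polynomial.aeval_X, one_pow] at this
  exact this

theorem det_pow_ne_zero (hζ : IsPrimitiveRoot ζ p) {m : ℕ} {z : Fin m → K}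
    (hz : Function.Injective z) (hzp : ∀ i, z i ^ p = 1) {n : Fin m → ℕ}
    (hn : Function.Injective n) (hnp : ∀ j, n j < p) :
    (of fun i j => z i ^ n j).det ≠ 0 := by
  obtain ⟨S, hS⟩ := det_vandermonde_X_dvd_det_X_pow (R := ℤ) n
  have hpS : (p : ℤ) ∣ MvPolynomial.eval 1 S → (p : ℤ) ∣ (vandermonde fun i => (n i : ℤ)).det :=
    fun h => det_vandermonde_eq_mul_eval_one hS ▸ dvd_mul_of_dvd_right h _
  have : NeZero p := ⟨(Fact.out : p.Prime).ne_zero⟩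
  choose a _ ha using fun i => hζ.eq_pow_of_pow_eq_one (hzp i)
  intro h0
  have hSz : MvPolynomial.aeval z S = 0 := by
    have := congrArg (MvPolynomial.aeval z) hS
    rw [map_mul, MvPolynomial.aeval_det_X_pow, MvPolynomial.aeval_det_vandermonde_X, h0,
      eq_comm, mul_eq_zero] at this
    exact this.resolve_left (det_vandermonde_ne_zero_iff.mpr hz)
  rw [← funext ha] at hSz
  exact Int.not_prime_dvd_det_vandermonde Fact.out hn hnp
    (hpS (hζ.prime_dvd_eval_one_of_aeval_pow_eq_zero a hSz))

end IsPrimitiveRoot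

theorem Set.exists_injective_fin_of_lt_ncard {α : Type*} {s : Set α} {k : ℕ} (h : k < s.ncard) :
    ∃ f : Fin (k + 1) → α, Function.Injective f ∧ ∀ i, f i ∈ s := by
  have hs : s.Finite := finite_of_ncard_pos (by omega)
  obtain ⟨a, -⟩ := nonempty_of_ncard_ne_zero (by omega : s.ncard ≠ 0)
  have : Nonempty α := ⟨a⟩
  obtain ⟨f, hfs, hf⟩ := (finite_univ (α := Fin (k + 1))).exists_injOn_of_encard_le (t := s)
    (by rw [encard_univ, ENat.card_eq_coe_fintype_card, Fintype.card_fin, ← hs.cast_ncard_eq]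
        exact_mod_cast h)
  exact ⟨f, injOn_univ.mp hf, fun i => hfs (mem_univ i)⟩

open Complex Finset

theorem sparse_poly_few_roots_of_unity
    (p : ℕ) (hp : p.Prime) (k : ℕ)
    (c : Fin (k + 1) → ℂ) (hc : ∀ j, c j ≠ 0)
    (n : Fin (k + 1) → ℕ) (hn : StrictMono n) (hnp : ∀ j, n j < p)
    (Q : Polynomial ℂ) (hQ : Q = ∑ j : Fin (k + 1), Polynomial.C (c j) * Polynomial.X ^ (n j)) :
    {z : ℂ | z ^ p = 1 ∧ Q.eval z = 0}.ncard ≤ k := by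
  by_contra! hlt
  obtain ⟨z, hz, hzZ⟩ := Set.exists_injective_fin_of_lt_ncard hlt
  have : Fact p.Prime := ⟨hp⟩
  refine (Complex.isPrimitiveRoot_exp p hp.ne_zero).det_pow_ne_zero hz (fun i => (hzZ i).1)
    hn.injective hnp ?_
  rw [← exists_mulVec_eq_zero_iff]
  refine ⟨c, fun h => hc 0 (congrFun h 0), funext fun i => ?_⟩
  have hQz := (hzZ i).2
  simp only [hQ, Polynomial.eval_finsetSum, Polynomial.eval_mul, Polynomial.eval_C,
    Polynomial.eval_pow, Polynomial.eval_X] at hQz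
  simpa [mulVec, dotProduct, mul_comm] using hQz
end

section
/- Let p be prime, A ⊆ ℤ/pℤ nonempty, and suppose f: ℤ/pℤ → ℂ is supported in A while f̂ vanishes on some set of cardinality |A|. Then f = 0. -/
open Complex

noncomputable def dft {p : ℕ} [NeZero p] (f : ZMod p → ℂ) (ξ : ZMod p) : ℂ :=
  (p : ℂ)⁻¹ * ∑ x : ZMod p, f x * Complex.exp (-2 * Real.pi * Complex.I * ((x.val : ℂ) * (ξ.val : ℂ)) / p)

/-!
Enumerate `A = {aᵢ}` and `B = {bⱼ}`. The vanishing of `f̂` on `B` says that the vector `(f aᵢ)`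
is killed by the square minor `(ζ ^ (aᵢ bⱼ))` of the Fourier matrix, so it suffices that such
minors are nonsingular (Chebotarev). Writing `X ^ b = 1 + (X - 1) gᵦ` with
`gᵦ = 1 + X + ⋯ + X ^ (b - 1)` and expanding `(1 + (X - 1) gᵦ) ^ a` binomially, multilinearity
of the determinant gives `det (X ^ (aᵢ bⱼ)) = (X - 1) ^ N * Q` with `N = 0 + 1 + ⋯ + (n - 1)` and
`Q(1) = det (choose aᵢ k) * det (bⱼ ^ k)`, which is nonzero mod `p` when the `aᵢ` and the `bⱼ`
are distinct residues. As `Φₚ(1) = p`, the minimal polynomial `Φₚ` of `ζ` does not divide `Q`,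
so `Q(ζ) ≠ 0`.
-/

open Finset Matrix Polynomial

theorem sum_range_card_add_card_sdiff_le_sum (s : Finset ℕ) :
    ∑ i ∈ range #s, i + #(s \ range #s) ≤ ∑ x ∈ s, x := by
  set r := range #s
  have hcard : #(r \ s) = #(s \ r) := card_sdiff_comm (by simp [r])
  have hsmall : ∑ x ∈ r \ s, (x + 1) ≤ #(r \ s) * #s :=
    sum_le_card_nsmul _ _ _ fun x hx => by simpa [r] using (mem_sdiff.mp hx).1
  have hlarge : #(s \ r) * #s ≤ ∑ x ∈ s \ r, x :=
    card_nsmul_le_sum _ _ _ fun x hx => by simpa [r] using (mem_sdiff.mp hx).2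
  rw [sum_add_distrib, sum_const, smul_eq_mul, mul_one, hcard] at hsmall
  rw [← sum_inter_add_sum_sdiff r s, ← sum_inter_add_sum_sdiff s r, inter_comm]
  omega

section InjectiveExponents

variable {n : ℕ} {κ : Fin n → ℕ}

theorem sum_eq_sum_range_of_injective_of_lt (hκ : Function.Injective κ) (h : ∀ i, κ i < n) :
    ∑ i, κ i = ∑ i ∈ range n, i := by
  have himage : univ.image κ = range n :=
    eq_of_subset_of_card_le (fun x hx => by obtain ⟨i, -, rfl⟩ := mem_image.mp hx; simpa using h i)
      (by simp [card_image_of_injective _ hκ])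
  rw [← himage, sum_image fun i _ j _ hij => hκ hij]

theorem sum_range_lt_sum_of_injective_of_le (hκ : Function.Injective κ) (h : ∃ i, n ≤ κ i) :
    ∑ i ∈ range n, i < ∑ i, κ i := by
  obtain ⟨i, hi⟩ := h
  have hcard : #(univ.image κ) = n := by simp [card_image_of_injective _ hκ]
  have hpos : 0 < #(univ.image κ \ range n) :=
    card_pos.mpr ⟨κ i, mem_sdiff.mpr ⟨mem_image_of_mem κ (mem_univ i), by simpa using hi⟩⟩
  have := sum_range_card_add_card_sdiff_le_sum (univ.image κ)
  rw [hcard, sum_image fun i _ j _ hij => hκ hij] at this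
  omega

end InjectiveExponents

theorem det_of_sum_mul {R : Type*} [CommRing R] {n : ℕ} (s : Finset ℕ) (c : Fin n → ℕ → R)
    (w : ℕ → Fin n → R) :
    det (of fun i j => ∑ k ∈ s, c i k * w k j)
      = ∑ κ ∈ Fintype.piFinset fun _ => s, (∏ i, c i (κ i)) * det (of fun i j => w (κ i) j) := by
  have hrows : (of fun i j => ∑ k ∈ s, c i k * w k j) = of fun i => ∑ k ∈ s, c i k • w k := by
    ext i j
    simp [Finset.sum_apply]
  rw [hrows]
  exact (detRowAlternating.toMultilinearMap.map_sum_finset (fun i k => c i k • w k) _).trans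
    (sum_congr rfl fun κ _ => MultilinearMap.map_smul_univ _ _ _)

/-- Only injective exponent vectors `κ` contribute to the expansion, and for those
`∑ κ ≥ 0 + 1 + ⋯ + (n - 1)`, with equality exactly when `κ` permutes `{0, …, n - 1}`. -/
theorem exists_det_sum_pow_mul_eq {R : Type*} [CommRing R] {n m : ℕ} (hnm : n ≤ m) (t : R)
    (c : Fin n → ℕ → R) (w : ℕ → Fin n → R) :
    ∃ H, det (of fun i j => ∑ k ∈ range m, c i k * t ^ k * w k j)
      = t ^ (∑ i ∈ range n, i)
        * (det (of fun i k : Fin n => c i k) * det (of fun k j : Fin n => w k j) + t * H) := by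
  set N := ∑ i ∈ range n, i
  set T : (Fin n → ℕ) → R := fun κ => (∏ i, c i (κ i)) * det (of fun i j => w (κ i) j)
  have hexpand : det (of fun i j => ∑ k ∈ range m, c i k * t ^ k * w k j)
      = ∑ κ ∈ Fintype.piFinset fun _ => range m, t ^ (∑ i, κ i) * T κ := by
    rw [det_of_sum_mul]
    refine sum_congr rfl fun κ _ => ?_
    rw [prod_mul_distrib, prod_pow_eq_pow_sum]
    ring
  have hlow : det (of fun i k : Fin n => c i k) * det (of fun k j : Fin n => w k j)
      = ∑ κ ∈ Fintype.piFinset fun _ => range n, T κ := by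
    rw [← det_mul, ← det_of_sum_mul]
    congr 1
    ext i j
    simp [mul_apply, Fin.sum_univ_eq_sum_range (fun k => c i k * w k j)]
  have hT : ∀ κ, ¬ Function.Injective κ → T κ = 0 := fun κ hκ => by
    obtain ⟨i, i', hii', hne⟩ := Function.not_injective_iff.mp hκ
    have hrows : (of fun i j => w (κ i) j) i = (of fun i j => w (κ i) j) i' := by
      ext j
      simp [hii']
    simp only [T, det_zero_of_row_eq hne hrows, mul_zero]
  have hhigh : t ^ (N + 1) ∣ ∑ κ ∈ (Fintype.piFinset fun _ => range m) \
      Fintype.piFinset fun _ => range n, t ^ (∑ i, κ i) * T κ := by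
    refine dvd_sum fun κ hκ => ?_
    by_cases hinj : Function.Injective κ
    · have hlarge : ∃ i, n ≤ κ i := by
        simpa [Fintype.mem_piFinset] using (mem_sdiff.mp hκ).2
      exact (pow_dvd_pow t (sum_range_lt_sum_of_injective_of_le hinj hlarge)).mul_right _
    · simp [hT κ hinj]
  obtain ⟨H, hH⟩ := hhigh
  refine ⟨H, ?_⟩
  rw [hexpand, ← sum_sdiff (Fintype.piFinset_subset _ _ fun _ => range_subset_range.mpr hnm), hH,
    hlow, pow_succ]
  have hsmall : ∀ κ ∈ Fintype.piFinset fun _ => range n, t ^ (∑ i, κ i) * T κ = t ^ N * T κ := by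
    intro κ hκ
    by_cases hinj : Function.Injective κ
    · rw [sum_eq_sum_range_of_injective_of_lt hinj (by simpa [Fintype.mem_piFinset] using hκ)]
    · simp [hT κ hinj]
  rw [sum_congr rfl hsmall, ← mul_sum]
  ring

theorem det_choose_mul_prod_factorial {R : Type*} [CommRing R] [IsDomain R] {n : ℕ}
    (x : Fin n → ℕ) :
    det (of fun i k : Fin n => ((x i).choose k : R)) * ∏ k : Fin n, ((k : ℕ).factorial : R)
      = det (vandermonde fun i => (x i : R)) := by
  rw [det_eval_matrixOfPolynomials_eq_det_vandermonde _ (fun k => descPochhammer R k)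
    (fun k => descPochhammer_natDegree _ _) (fun k => monic_descPochhammer _ _), mul_comm,
    ← det_mul_row]
  congr 1
  ext i k
  simp [descPochhammer_eval_eq_descFactorial, Nat.descFactorial_eq_factorial_mul_choose]

theorem det_choose_val_ne_zero {p : ℕ} [Fact p.Prime] {n : ℕ} {a : Fin n → ZMod p}
    (ha : Function.Injective a) :
    det (of fun i k : Fin n => ((a i).val.choose k : ZMod p)) ≠ 0 := by
  have hnp : n ≤ p := by simpa using Fintype.card_le_of_injective a ha
  have hfact : ∏ k : Fin n, ((k : ℕ).factorial : ZMod p) ≠ 0 :=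
    prod_ne_zero_iff.mpr fun k _ => by
      rw [Ne, ZMod.natCast_eq_zero_iff, Nat.Prime.dvd_factorial Fact.out]
      omega
  have hvand : det (vandermonde fun i => ((a i).val : ZMod p)) ≠ 0 :=
    det_vandermonde_ne_zero_iff.mpr (by simpa [ZMod.natCast_zmod_val] using ha)
  rw [← det_choose_mul_prod_factorial] at hvand
  exact left_ne_zero_of_mul hvand

theorem aeval_ne_zero_of_not_dvd_eval_one {K : Type*} [Field K] [CharZero K] {p : ℕ}
    [Fact p.Prime] {ζ : K} (hζ : IsPrimitiveRoot ζ p) {Q : ℤ[X]} (hQ : ¬ (p : ℤ) ∣ Q.eval 1) :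
    aeval ζ Q ≠ 0 := by
  have hp : 0 < p := (Fact.out : p.Prime).pos
  intro hζQ
  have hdvd := minpoly.isIntegrallyClosed_dvd (hζ.isIntegral hp) hζQ
  rw [← cyclotomic_eq_minpoly hζ hp] at hdvd
  exact hQ (by simpa using eval_dvd (x := 1) hdvd)

theorem exists_det_X_pow_mul_eq {n : ℕ} (a b : Fin n → ℕ) :
    ∃ Q : ℤ[X], det (of fun i j => (X : ℤ[X]) ^ (a i * b j)) = (X - 1) ^ (∑ i ∈ range n, i) * Q ∧
      Q.eval 1 = det (of fun i k : Fin n => ((a i).choose k : ℤ))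
        * det (vandermonde fun j => (b j : ℤ)) := by
  set m := n + ∑ i, a i
  have ha : ∀ i, a i < m := fun i => by
    have := single_le_sum (fun j _ => Nat.zero_le (a j)) (mem_univ i)
    have := i.pos
    omega
  set g : Fin n → ℤ[X] := fun j => ∑ r ∈ range (b j), X ^ r
  obtain ⟨H, hH⟩ := exists_det_sum_pow_mul_eq (by omega : n ≤ m) (X - 1)
    (fun i k => ((a i).choose k : ℤ[X])) (fun k j => g j ^ k)
  have hM : (of fun i j => ∑ k ∈ range m, ((a i).choose k : ℤ[X]) * (X - 1) ^ k * g j ^ k)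
      = of fun i j => (X : ℤ[X]) ^ (a i * b j) := by
    refine Matrix.ext fun i j => ?_
    have hXb : (X : ℤ[X]) ^ b j = (X - 1) * g j + 1 := by rw [mul_comm, geom_sum_mul]; ring
    rw [of_apply, of_apply, mul_comm (a i), pow_mul, hXb, add_pow]
    refine (sum_subset (M := ℤ[X]) (range_subset_range.mpr (ha i)) fun k _ hk => ?_).symm.trans
      (sum_congr rfl fun k _ => ?_)
    · rw [Nat.choose_eq_zero_of_lt (by simpa using hk)]
      simp
    · rw [mul_pow]
      ring
  rw [hM] at hH
  refine ⟨_, hH, ?_⟩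
  have hmap : (evalRingHom 1).mapMatrix (of fun k j : Fin n => g j ^ (k : ℕ))
      = (vandermonde fun j => (b j : ℤ))ᵀ := by
    ext k j
    simp [g, eval_geom_sum]
  rw [eval_add, eval_mul, eval_mul, eval_sub, eval_X, eval_one, sub_self, zero_mul, add_zero,
    ← coe_evalRingHom, RingHom.map_det, RingHom.map_det, hmap, det_transpose]
  congr 2
  ext i k
  simp

theorem det_pow_val_mul_val_ne_zero {K : Type*} [Field K] [CharZero K] {p : ℕ} [Fact p.Prime]
    {ζ : K} (hζ : IsPrimitiveRoot ζ p) {n : ℕ} {a b : Fin n → ZMod p}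
    (ha : Function.Injective a) (hb : Function.Injective b) :
    det (of fun i j => ζ ^ ((a i).val * (b j).val)) ≠ 0 := by
  obtain ⟨Q, hdet, hQ1⟩ := exists_det_X_pow_mul_eq (fun i => (a i).val) (fun j => (b j).val)
  have hζdet : det (of fun i j => ζ ^ ((a i).val * (b j).val))
      = (ζ - 1) ^ (∑ i ∈ range n, i) * aeval ζ Q := by
    have := congrArg (aeval ζ) hdet
    rw [AlgHom.map_det, map_mul, map_pow, map_sub, aeval_X, map_one] at this
    rw [← this]
    congr 1
    ext i j
    simp
  have hQ : ¬ (p : ℤ) ∣ Q.eval 1 := by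
    rw [← ZMod.intCast_zmod_eq_zero_iff_dvd, hQ1, Int.cast_mul, ← eq_intCast (Int.castRingHom _),
      ← eq_intCast (Int.castRingHom _), RingHom.map_det, RingHom.map_det]
    refine mul_ne_zero ?_ ?_
    · convert det_choose_val_ne_zero ha using 2
      ext i k
      simp
    · convert det_vandermonde_ne_zero_iff.mpr hb using 2
      ext j k
      simp
  rw [hζdet]
  exact mul_ne_zero (pow_ne_zero _ (sub_ne_zero.mpr (hζ.ne_one (Fact.out : p.Prime).one_lt)))
    (aeval_ne_zero_of_not_dvd_eval_one hζ hQ)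

theorem eq_zero_of_forall_sum_mul_pow_val_mul_val_eq_zero {K : Type*} [Field K] [CharZero K]
    {p : ℕ} [Fact p.Prime] {ζ : K} (hζ : IsPrimitiveRoot ζ p) {n : ℕ} {a b : Fin n → ZMod p}
    (ha : Function.Injective a) (hb : Function.Injective b) {v : Fin n → K}
    (hv : ∀ j, ∑ i, v i * ζ ^ ((a i).val * (b j).val) = 0) : v = 0 := by
  refine eq_zero_of_mulVec_eq_zero (det_pow_val_mul_val_ne_zero hζ hb ha) (funext fun j => ?_)
  simpa [mulVec, dotProduct, mul_comm] using hv j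

theorem sum_eq_sum_equiv_of_support_subset {α ι M : Type*} [Fintype α] [Fintype ι]
    [AddCommMonoid M] {A : Set α} {F : α → M} (hF : ∀ x ∉ A, F x = 0) (e : ι ≃ A) :
    ∑ x, F x = ∑ i, F (e i) := by
  classical
  rw [← Fintype.sum_subtype_add_sum_subtype (· ∈ A) F,
    Fintype.sum_eq_zero _ fun x : {x // x ∉ A} => hF x x.2, add_zero]
  exact (e.sum_comp fun x : A => F x).symm

theorem isPrimitiveRoot_exp_neg {p : ℕ} (hp : p ≠ 0) :
    IsPrimitiveRoot (Complex.exp (-2 * Real.pi * Complex.I / p)) p := by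
  have h := (Complex.isPrimitiveRoot_exp p hp).inv
  rwa [← Complex.exp_neg, ← neg_div, ← neg_mul, ← neg_mul] at h

theorem dft_eq_sum_pow {p : ℕ} [NeZero p] (f : ZMod p → ℂ) (ξ : ZMod p) :
    dft f ξ
      = (p : ℂ)⁻¹ * ∑ x, f x * Complex.exp (-2 * Real.pi * Complex.I / p) ^ (x.val * ξ.val) := by
  simp only [dft, ← Complex.exp_nat_mul]
  congr 2 with x
  push_cast
  ring_nf

theorem supported_in_A_hat_vanishes_general
    (p : ℕ) (hp : p.Prime) [NeZero p]
    (A B : Set (ZMod p)) (hB : B.ncard = A.ncard)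
    (f : ZMod p → ℂ) (hsupp : ∀ x : ZMod p, x ∉ A → f x = 0)
    (hhat : ∀ ξ ∈ B, dft f ξ = 0) :
    f = 0 := by
  have := Fact.mk hp
  set ζ := Complex.exp (-2 * Real.pi * Complex.I / p)
  let eA : Fin A.ncard ≃ A := (Finite.equivFinOfCardEq (Nat.card_coe_set_eq A)).symm
  let eB : Fin A.ncard ≃ B := (Finite.equivFinOfCardEq ((Nat.card_coe_set_eq B).trans hB)).symm
  have hsum : ∀ j, ∑ i, f (eA i) * ζ ^ ((eA i : ZMod p).val * (eB j : ZMod p).val) = 0 := by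
    intro j
    have hdft := hhat _ (eB j).2
    rw [dft_eq_sum_pow, sum_eq_sum_equiv_of_support_subset (fun x hx => by simp [hsupp x hx]) eA]
      at hdft
    exact (mul_eq_zero.mp hdft).resolve_left (inv_ne_zero (Nat.cast_ne_zero.mpr hp.ne_zero))
  have hfA := eq_zero_of_forall_sum_mul_pow_val_mul_val_eq_zero
    (isPrimitiveRoot_exp_neg hp.ne_zero) (Subtype.val_injective.comp eA.injective)
    (Subtype.val_injective.comp eB.injective) hsum
  funext x
  by_cases hx : x ∈ A
  · simpa using congrFun hfA (eA.symm ⟨x, hx⟩)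
  · exact hsupp x hx

theorem supported_in_A_hat_vanishes
    (p : ℕ) (hp : p.Prime) [NeZero p]
    (A B : Set (ZMod p)) (hA : A.Nonempty) (hB : B.ncard = A.ncard)
    (f : ZMod p → ℂ) (hsupp : ∀ x : ZMod p, x ∉ A → f x = 0)
    (hhat : ∀ ξ ∈ B, dft f ξ = 0) :
    f = 0 :=
  supported_in_A_hat_vanishes_general p hp A B hB f hsupp hhat
end
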